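/- Let Σ be a 2×2 real symmetric positive definite matrix, e = (1, 0) and n = (0, 1). Then every a ∈ ℝ² has the decomposition a = (⟨Σ⁻¹a, e⟩ / ⟨Σ⁻¹e, e⟩) e + (⟨a, n⟩ / ⟨Σn, n⟩) Σn, and the reflected vector ã = (⟨Σ⁻¹a, e⟩ / ⟨Σ⁻¹e, e⟩) e − (⟨a, n⟩ / ⟨Σn, n⟩) Σn satisfies ⟨ã, Σ⁻¹ã⟩ = ⟨a, Σ⁻¹a⟩ and ⟨Σ⁻¹ã, e⟩ = ⟨Σ⁻¹a, e⟩. -/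

import Mathlib

/-!
For the form `B(x, y) = ⟨S⁻¹x, y⟩` the vectors `e` and `Sn` are orthogonal, since
`B(Sn, e) = ⟨n, e⟩ = 0`. Hence changing the sign of the `Sn`-component of a vector preserves both
`B(x, x)` and `B(x, e)`. The decomposition holds because the remainder `r` of `a` after subtracting
the two `B`-projections satisfies `⟨r, n⟩ = 0` and `B(r, e) = 0`; the first makes `r` a multiple
of `e` and the second then forces `r = 0`.
-/

open Matrix Set

noncomputable section

abbrev V : Type := Fin 2 → ℝ

section

variable {ι : Type*} [Fintype ι] {M : Matrix ι ι ℝ} {u v : ι → ℝ}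

theorem dotProduct_mulVec_smul_sub_smul_of_orthogonal (hM : M.IsSymm)
    (horth : M *ᵥ v ⬝ᵥ u = 0) (α β : ℝ) :
    (α • u - β • v) ⬝ᵥ M *ᵥ (α • u - β • v) = (α • u + β • v) ⬝ᵥ M *ᵥ (α • u + β • v) := by
  have huv : u ⬝ᵥ M *ᵥ v = 0 := by rwa [dotProduct_comm]
  have hvu : v ⬝ᵥ M *ᵥ u = 0 := by rwa [dotProduct_mulVec, ← hM.eq, vecMul_transpose]
  simp only [mulVec_sub, mulVec_add, mulVec_smul, dotProduct_sub, dotProduct_add, sub_dotProduct,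
    add_dotProduct, dotProduct_smul, smul_dotProduct, huv, hvu, smul_eq_mul]
  ring

theorem mulVec_smul_sub_smul_dotProduct_of_orthogonal (horth : M *ᵥ v ⬝ᵥ u = 0) (α β : ℝ) :
    M *ᵥ (α • u - β • v) ⬝ᵥ u = M *ᵥ (α • u + β • v) ⬝ᵥ u := by
  simp only [mulVec_sub, mulVec_add, mulVec_smul, sub_dotProduct, add_dotProduct,
    smul_dotProduct, horth, smul_zero, sub_zero, add_zero]

theorem Matrix.PosDef.mulVec_dotProduct_self_ne_zero (hM : M.PosDef) {x : ι → ℝ} (hx : x ≠ 0) :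
    M *ᵥ x ⬝ᵥ x ≠ 0 := by
  rw [dotProduct_comm]
  exact (hM.dotProduct_mulVec_pos hx).ne'

theorem inv_mulVec_mulVec [DecidableEq ι] (hM : IsUnit M.det) (x : ι → ℝ) :
    M⁻¹ *ᵥ (M *ᵥ x) = x := by
  rw [mulVec_mulVec, nonsing_inv_mul M hM, one_mulVec]

end

theorem eq_zero_of_dotProduct_eq_zero_of_mulVec_dotProduct_eq_zero {M : Matrix (Fin 2) (Fin 2) ℝ}
    (hM : M *ᵥ ![1, 0] ⬝ᵥ ![1, 0] ≠ 0) {r : Fin 2 → ℝ} (hr₁ : r ⬝ᵥ ![0, 1] = 0)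
    (hr₀ : M *ᵥ r ⬝ᵥ ![1, 0] = 0) : r = 0 := by
  have hr : r = r 0 • ![1, 0] := by
    ext i; fin_cases i <;> simp_all [dotProduct, Fin.sum_univ_two]
  rw [hr, mulVec_smul, smul_dotProduct, smul_eq_mul, mul_eq_zero] at hr₀
  rw [hr, hr₀.resolve_right hM, zero_smul]

theorem eq_smul_add_smul_mulVec {S : Matrix (Fin 2) (Fin 2) ℝ} (hS : IsUnit S.det)
    (he : S⁻¹ *ᵥ ![1, 0] ⬝ᵥ ![1, 0] ≠ 0) (hn : S *ᵥ ![0, 1] ⬝ᵥ ![0, 1] ≠ 0) (a : Fin 2 → ℝ) :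
    a = ((S⁻¹ *ᵥ a ⬝ᵥ ![1, 0]) / (S⁻¹ *ᵥ ![1, 0] ⬝ᵥ ![1, 0])) • ![1, 0] +
        ((a ⬝ᵥ ![0, 1]) / (S *ᵥ ![0, 1] ⬝ᵥ ![0, 1])) • S *ᵥ ![0, 1] := by
  have hen : ![1, 0] ⬝ᵥ ![0, 1] = (0 : ℝ) := by simp
  have hne : ![0, 1] ⬝ᵥ ![1, 0] = (0 : ℝ) := by simp
  rw [← sub_eq_zero]
  apply eq_zero_of_dotProduct_eq_zero_of_mulVec_dotProduct_eq_zero he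
  · simp only [sub_dotProduct, add_dotProduct, smul_dotProduct, smul_eq_mul, hen,
      div_mul_cancel₀ _ hn, mul_zero, zero_add, sub_self]
  · simp only [mulVec_sub, mulVec_add, mulVec_smul, inv_mulVec_mulVec hS, sub_dotProduct,
      add_dotProduct, smul_dotProduct, smul_eq_mul, hne, div_mul_cancel₀ _ he, mul_zero,
      add_zero, sub_self]

theorem stmt_9_general
    (S : Matrix (Fin 2) (Fin 2) ℝ)
    (hSpd : S.PosDef)
    (e n : V) (he : e = ![1, 0]) (hn : n = ![0, 1])
    (a : V)
    (ta : V)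
    (hta : ta = ((S⁻¹.mulVec a ⬝ᵥ e) / (S⁻¹.mulVec e ⬝ᵥ e)) • e -
      ((a ⬝ᵥ n) / (S.mulVec n ⬝ᵥ n)) • S.mulVec n) :
    a = ((S⁻¹.mulVec a ⬝ᵥ e) / (S⁻¹.mulVec e ⬝ᵥ e)) • e +
        ((a ⬝ᵥ n) / (S.mulVec n ⬝ᵥ n)) • S.mulVec n ∧
    ta ⬝ᵥ S⁻¹.mulVec ta = a ⬝ᵥ S⁻¹.mulVec a ∧
    S⁻¹.mulVec ta ⬝ᵥ e = S⁻¹.mulVec a ⬝ᵥ e := by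
  subst he hn hta
  have hS : IsUnit S.det := (isUnit_iff_isUnit_det S).1 hSpd.isUnit
  have horth : S⁻¹ *ᵥ (S *ᵥ ![0, 1]) ⬝ᵥ ![1, 0] = 0 := by
    rw [inv_mulVec_mulVec hS]; simp
  have hdecomp := eq_smul_add_smul_mulVec hS
    (hSpd.inv.mulVec_dotProduct_self_ne_zero (by simp))
    (hSpd.mulVec_dotProduct_self_ne_zero (by simp)) a
  refine ⟨hdecomp, ?_, ?_⟩
  · rw [dotProduct_mulVec_smul_sub_smul_of_orthogonal
      (isHermitian_iff_isSymm.1 hSpd.inv.isHermitian) horth, ← hdecomp]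
  · rw [mulVec_smul_sub_smul_dotProduct_of_orthogonal horth, ← hdecomp]

/-- orthogonal decomposition of a vector `a` in the basis `{e, Σn}` w.r.t. the
inner product `⟨Σ⁻¹·,·⟩`, and the properties of the reflected vector `ã`
(eqs. (4.5), (4.6), (4.11)). -/
theorem stmt_9
    (S : Matrix (Fin 2) (Fin 2) ℝ)
    (hSpd : S.PosDef) (hSsym : S.IsSymm)
    (e n : V) (he : e = ![1, 0]) (hn : n = ![0, 1])
    (a : V)
    (ta : V)
    (hta : ta = ((S⁻¹.mulVec a ⬝ᵥ e) / (S⁻¹.mulVec e ⬝ᵥ e)) • e -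
      ((a ⬝ᵥ n) / (S.mulVec n ⬝ᵥ n)) • S.mulVec n) :
    a = ((S⁻¹.mulVec a ⬝ᵥ e) / (S⁻¹.mulVec e ⬝ᵥ e)) • e +
        ((a ⬝ᵥ n) / (S.mulVec n ⬝ᵥ n)) • S.mulVec n ∧
    ta ⬝ᵥ S⁻¹.mulVec ta = a ⬝ᵥ S⁻¹.mulVec a ∧
    S⁻¹.mulVec ta ⬝ᵥ e = S⁻¹.mulVec a ⬝ᵥ e :=
  stmt_9_general S hSpd e n he hn a ta hta
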